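/- arXiv:0909.4770 — 5 statements merged into one kernel-verified Lean document; each statement's English description precedes it below -/
import Mathlib

section
/- Let f ∈ ℤΓ be invertible in ℓ¹(Γ) with inverse f⁻¹, and set f̂ := (f⁻¹)*. Define ξ : ℓ∞(Γ, ℤ) → 𝕋^Γ by ξ(h) = π^Γ(h·f̂). Then ξ is a group homomorphism whose image is contained in X_f := {x ∈ 𝕋^Γ : x·f* = 0}, i.e., ξ(h)·f* = 0 for every h ∈ ℓ∞(Γ, ℤ). -/
open scoped BigOperators

/-- Convolution `(g·h)(γ) = ∑ β, g β * h (β⁻¹ γ)` of real functions. -/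
noncomputable def convR {Γ : Type*} [Group Γ] (g h : Γ → ℝ) : Γ → ℝ :=
  fun γ => ∑' β : Γ, g β * h (β⁻¹ * γ)

/-- Indicator of the identity. -/
def deltaE (Γ : Type*) [Group Γ] [DecidableEq Γ] : Γ → ℝ :=
  fun γ => if γ = 1 then 1 else 0

/-- The adjoint `f*` of `f ∈ ℤΓ`: `f*(γ) = f(γ⁻¹)`. -/
def fstar {Γ : Type*} [Group Γ] (f : Γ →₀ ℤ) : Γ →₀ ℤ :=
  Finsupp.equivMapDomain (Equiv.inv Γ) f

/-- Convolution of a `𝕋`-valued function with `g ∈ ℤΓ`: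
`(x·g)(γ) = ∑ β, g(β) • x(γ β⁻¹)`. -/
noncomputable def convT {Γ : Type*} [Group Γ] (x : Γ → AddCircle (1 : ℝ))
    (g : Γ →₀ ℤ) : Γ → AddCircle (1 : ℝ) :=
  fun γ => ∑ β ∈ g.support, g β • x (γ * β⁻¹)

/-- `ξ(h) = π^Γ(h · f̂)` where `f̂ = (f⁻¹)*`, i.e.
`ξ(h)(γ) = π(∑ β, h(γ β⁻¹) f⁻¹(β⁻¹))`. -/
noncomputable def xi {Γ : Type*} [Group Γ] (finv : Γ → ℝ) (h : Γ → ℤ) :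
    Γ → AddCircle (1 : ℝ) :=
  fun γ => ((∑' β : Γ, (h (γ * β⁻¹) : ℝ) * finv β⁻¹ : ℝ) : AddCircle (1 : ℝ))

lemma summable_key {Γ : Type*} (v : Γ → ℝ) (hv : Summable fun β => ‖v β‖)
    (h : Γ → ℤ) (M : ℤ) (hM : ∀ γ, |h γ| ≤ M) (a : Γ → Γ) :
    Summable fun β => (h (a β) : ℝ) * v β := by
  apply Summable.of_norm
  refine Summable.of_nonneg_of_le (fun β => norm_nonneg _) (fun β => ?_) (hv.mul_left (M : ℝ))
  rw [norm_mul]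
  apply mul_le_mul_of_nonneg_right _ (norm_nonneg _)
  rw [Real.norm_eq_abs, ← Int.cast_abs]
  exact_mod_cast hM (a β)

/-- If `f ∈ ℤΓ` is invertible in `ℓ¹(Γ)` with inverse `finv`, and
`ξ(h) = π^Γ(h·f̂)` with `f̂ = (f⁻¹)*`, then `ξ` is a group homomorphism on
`ℓ∞(Γ, ℤ)` and its image lies in `X_f = {x ∈ 𝕋^Γ : x·f* = 0}`. -/
theorem stmt3 {Γ : Type*} [Group Γ] [Countable Γ] [DecidableEq Γ]
    (f : Γ →₀ ℤ) (finv : Γ → ℝ)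
    (hfinv : Summable fun γ => ‖finv γ‖)
    (h1 : convR (fun γ => (f γ : ℝ)) finv = deltaE Γ)
    (h2 : convR finv (fun γ => (f γ : ℝ)) = deltaE Γ) :
    (∀ g h : Γ → ℤ, (∃ M : ℤ, ∀ γ, |g γ| ≤ M) → (∃ M : ℤ, ∀ γ, |h γ| ≤ M) →
        xi finv (g + h) = xi finv g + xi finv h) ∧
    (∀ h : Γ → ℤ, (∃ M : ℤ, ∀ γ, |h γ| ≤ M) →
        ∀ γ, convT (xi finv h) (fstar f) γ = 0) := by

  have hinv' : Summable fun β : Γ => ‖finv β⁻¹‖ := by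
    have := ((Equiv.inv Γ).summable_iff (f := fun γ => ‖finv γ‖)).mpr hfinv
    exact this
  have hml : ∀ b : Γ, Summable fun β : Γ => ‖finv (b * β)‖ := by
    intro b
    have := ((Equiv.mulLeft b).summable_iff (f := fun γ => ‖finv γ‖)).mpr hfinv
    exact this
  constructor
  · rintro g h ⟨Mg, hMg⟩ ⟨Mh, hMh⟩
    funext γ
    have hg : Summable fun β : Γ => (g (γ * β⁻¹) : ℝ) * finv β⁻¹ :=
      summable_key _ hinv' g Mg hMg _
    have hh : Summable fun β : Γ => (h (γ * β⁻¹) : ℝ) * finv β⁻¹ :=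
      summable_key _ hinv' h Mh hMh _
    show ((∑' β : Γ, ((g + h) (γ * β⁻¹) : ℝ) * finv β⁻¹ : ℝ) : AddCircle (1:ℝ)) = _
    have hre : (fun β : Γ => ((g + h) (γ * β⁻¹) : ℝ) * finv β⁻¹)
        = fun β : Γ => (g (γ * β⁻¹) : ℝ) * finv β⁻¹ + (h (γ * β⁻¹) : ℝ) * finv β⁻¹ := by
      funext β
      simp [Pi.add_apply, add_mul]
    rw [hre, Summable.tsum_add hg hh]
    rfl
  · rintro h ⟨M, hM⟩ γ
    -- key reindexing of xi
    have hxi : ∀ β : Γ, xi finv h (γ * β⁻¹)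
        = ((∑' δ : Γ, (h (γ * δ) : ℝ) * finv (β * δ) : ℝ) : AddCircle (1:ℝ)) := by
      intro β
      unfold xi
      congr 1
      calc ∑' α : Γ, (h (γ * β⁻¹ * α⁻¹) : ℝ) * finv α⁻¹
          = ∑' α : Γ, (h (γ * β⁻¹ * α) : ℝ) * finv α :=
            (Equiv.inv Γ).tsum_eq (fun α => (h (γ * β⁻¹ * α) : ℝ) * finv α)
        _ = ∑' δ : Γ, (h (γ * β⁻¹ * (β * δ)) : ℝ) * finv (β * δ) :=
            ((Equiv.mulLeft β).tsum_eq (fun α => (h (γ * β⁻¹ * α) : ℝ) * finv α)).symm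
        _ = ∑' δ : Γ, (h (γ * δ) : ℝ) * finv (β * δ) := by
            refine tsum_congr fun δ => ?_
            congr 2
            group
    have hsum : ∀ β : Γ, Summable fun δ : Γ => (h (γ * δ) : ℝ) * finv (β * δ) :=
      fun β => summable_key _ (hml β) h M hM _
    have hfs : ∀ β : Γ, (fstar f) β = f β⁻¹ := by
      intro β; simp [fstar, Finsupp.equivMapDomain_apply]
    have hinner : ∀ δ : Γ,
        (∑ β ∈ (fstar f).support, ((fstar f) β : ℝ) * finv (β * δ)) = deltaE Γ δ := by
      intro δ
      rw [← congrFun h1 δ]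
      unfold convR
      rw [← (Equiv.inv Γ).tsum_eq (fun β : Γ => ((f β : ℝ)) * finv (β⁻¹ * δ))]
      simp only [Equiv.inv_apply, inv_inv]
      refine (tsum_eq_sum ?_).symm
      intro β hβ
      simp [Finsupp.notMem_support_iff.mp hβ]
    -- main real computation
    have main : (∑ β ∈ (fstar f).support, ((fstar f) β : ℝ)
        * ∑' δ : Γ, (h (γ * δ) : ℝ) * finv (β * δ)) = (h γ : ℝ) := by
      calc ∑ β ∈ (fstar f).support, ((fstar f) β : ℝ) * ∑' δ : Γ, (h (γ * δ) : ℝ) * finv (β * δ)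
          = ∑ β ∈ (fstar f).support, ∑' δ : Γ, ((fstar f) β : ℝ) * ((h (γ * δ) : ℝ) * finv (β * δ)) := by
            refine Finset.sum_congr rfl fun β _ => ?_
            rw [tsum_mul_left]
        _ = ∑' δ : Γ, ∑ β ∈ (fstar f).support, ((fstar f) β : ℝ) * ((h (γ * δ) : ℝ) * finv (β * δ)) :=
            (Summable.tsum_finsetSum (fun β _ => ((hsum β).mul_left _))).symm
        _ = ∑' δ : Γ, (h (γ * δ) : ℝ) * ∑ β ∈ (fstar f).support, ((fstar f) β : ℝ) * finv (β * δ) := by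
            refine tsum_congr fun δ => ?_
            rw [Finset.mul_sum]
            refine Finset.sum_congr rfl fun β _ => by ring
        _ = ∑' δ : Γ, (h (γ * δ) : ℝ) * deltaE Γ δ := by
            refine tsum_congr fun δ => by rw [hinner δ]
        _ = (h γ : ℝ) := by
            rw [tsum_eq_single 1 (fun δ hδ => by simp [deltaE, hδ])]
            simp [deltaE]
    -- conclude
    set φ : ℝ →+ AddCircle (1:ℝ) := QuotientAddGroup.mk' _ with hφ
    have hcoe : ∀ r : ℝ, (r : AddCircle (1:ℝ)) = φ r := fun r => rfl
    have : convT (xi finv h) (fstar f) γ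
        = φ (∑ β ∈ (fstar f).support, ((fstar f) β : ℝ)
            * ∑' δ : Γ, (h (γ * δ) : ℝ) * finv (β * δ)) := by
      rw [map_sum]
      unfold convT
      refine Finset.sum_congr rfl fun β _ => ?_
      rw [hxi β, hcoe, ← map_zsmul φ]
      congr 1
      rw [zsmul_eq_mul]
    rw [this, main, ← hcoe]
    rw [AddCircle.coe_eq_zero_iff]
    exact ⟨h γ, by simp⟩
end

section
/- With f ∈ ℤΓ invertible in ℓ¹(Γ), fix irrational κ ∈ [0,1], let L : 𝕋^Γ → ℓ∞(Γ) be the lift taking values in [-1+κ, κ), and define P(x) := L(x)·f*. Then for every x ∈ X_f, P(x) takes integer values, and ξ(P(x)) = x; in particular ξ : ℓ∞(Γ, ℤ) → X_f is surjective. -/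
open scoped BigOperators

/-- `P(x) = L(x)·f*`, a finite sum over the support of `f*`. -/
def Pmap {Γ : Type*} [Group Γ] (f : Γ →₀ ℤ)
    (L : (Γ → AddCircle (1 : ℝ)) → Γ → ℝ) (x : Γ → AddCircle (1 : ℝ)) : Γ → ℝ :=
  fun γ => ∑ β ∈ (fstar f).support, L x (γ * β⁻¹) * ((fstar f) β : ℝ)

/-!
Since `L(x)` lifts `x`, the real convolution `P(x) = L(x)·f*` projects to `x·f* = 0` in `𝕋`, so it
is integer valued, and it is bounded because `L(x)` is. Convolving with the `ℓ¹` inverse `f̂` and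
exchanging the finite sum over the support of `f` with the absolutely convergent series gives
`P(x)·f̂ = L(x)·(f*·f̂) = L(x)`, whose projection is `x`.
-/

open Finset

lemma summable_mul_of_abs_le {ι : Type*} {g b : ι → ℝ} {C : ℝ} (hg : Summable fun i => ‖g i‖)
    (hb : ∀ i, |b i| ≤ C) : Summable fun i => b i * g i :=
  hg.mul_left C |>.of_norm_bounded fun i => by
    rw [norm_mul, Real.norm_eq_abs]
    exact mul_le_mul_of_nonneg_right (hb i) (norm_nonneg _)

section Convolution

variable {Γ : Type*} [Group Γ]

lemma Pmap_eq_sum_support (f : Γ →₀ ℤ) (L : (Γ → AddCircle (1 : ℝ)) → Γ → ℝ)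
    (x : Γ → AddCircle (1 : ℝ)) (γ : Γ) :
    Pmap f L x γ = ∑ α ∈ f.support, L x (γ * α) * f α := by
  change (fstar f).sum (fun β m => L x (γ * β⁻¹) * m) = _
  simp only [fstar, Finsupp.sum_equivMapDomain, Equiv.inv_apply, inv_inv]
  rfl

lemma coe_Pmap (f : Γ →₀ ℤ) (L : (Γ → AddCircle (1 : ℝ)) → Γ → ℝ)
    (x : Γ → AddCircle (1 : ℝ)) (hlift : ∀ γ, (L x γ : AddCircle (1 : ℝ)) = x γ) (γ : Γ) :
    (Pmap f L x γ : AddCircle (1 : ℝ)) = convT x (fstar f) γ := by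
  rw [Pmap, convT, ← QuotientAddGroup.mk'_apply, map_sum]
  refine sum_congr rfl fun β _ => ?_
  rw [QuotientAddGroup.mk'_apply, mul_comm, ← zsmul_eq_mul, AddCircle.coe_zsmul, hlift]

lemma abs_Pmap_le (f : Γ →₀ ℤ) (L : (Γ → AddCircle (1 : ℝ)) → Γ → ℝ)
    (x : Γ → AddCircle (1 : ℝ)) {C : ℝ} (hC : ∀ γ, |L x γ| ≤ C) (γ : Γ) :
    |Pmap f L x γ| ≤ C * ∑ β ∈ (fstar f).support, |(fstar f β : ℝ)| := by
  rw [mul_sum]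
  refine (abs_sum_le_sum_abs _ _).trans (sum_le_sum fun β _ => ?_)
  rw [abs_mul]
  exact mul_le_mul_of_nonneg_right (hC _) (abs_nonneg _)

lemma convR_intCast_eq_sum_support (g : Γ → ℝ) (f : Γ →₀ ℤ) (ε : Γ) :
    convR g (fun γ => (f γ : ℝ)) ε = ∑ α ∈ f.support, g (ε * α⁻¹) * f α := by
  rw [convR, ← ((Equiv.inv Γ).trans (Equiv.mulLeft ε)).tsum_eq]
  refine (tsum_eq_sum fun α hα => ?_).trans (sum_congr rfl fun α _ => ?_)
  · simp [Finsupp.notMem_support_iff.1 hα]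
  · simp

variable [DecidableEq Γ]

/-- The associativity `(ℓ·f*)·f̂ = ℓ·(f*·f̂)` for bounded `ℓ`, read at the identity. -/
lemma tsum_sum_support_mul_eq_apply_one (f : Γ →₀ ℤ) {finv : Γ → ℝ}
    (hfinv : Summable fun γ => ‖finv γ‖)
    (hinv : convR finv (fun γ => (f γ : ℝ)) = deltaE Γ) {ℓ : Γ → ℝ} {C : ℝ}
    (hℓ : ∀ γ, |ℓ γ| ≤ C) :
    ∑' δ, (∑ α ∈ f.support, ℓ (δ * α) * f α) * finv δ = ℓ 1 := by
  have hℓf (α : Γ) (γ : Γ) : |ℓ γ * f α| ≤ C * |(f α : ℝ)| := by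
    rw [abs_mul]
    exact mul_le_mul_of_nonneg_right (hℓ γ) (abs_nonneg _)
  have hshift (α : Γ) : Summable fun ε => ‖finv (ε * α⁻¹)‖ :=
    (Equiv.mulRight α⁻¹).summable_iff.2 hfinv
  calc ∑' δ, (∑ α ∈ f.support, ℓ (δ * α) * f α) * finv δ
      = ∑ α ∈ f.support, ∑' δ, ℓ (δ * α) * f α * finv δ := by
        simp_rw [sum_mul]
        exact Summable.tsum_finsetSum fun α _ =>
          summable_mul_of_abs_le hfinv fun δ => hℓf α (δ * α)
    _ = ∑ α ∈ f.support, ∑' ε, ℓ ε * f α * finv (ε * α⁻¹) := by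
        refine sum_congr rfl fun α _ => ?_
        rw [← (Equiv.mulRight α⁻¹).tsum_eq]
        simp
    _ = ∑' ε, ℓ ε * ∑ α ∈ f.support, finv (ε * α⁻¹) * f α := by
        rw [← Summable.tsum_finsetSum fun α _ =>
          summable_mul_of_abs_le (hshift α) (hℓf α)]
        simp_rw [mul_sum, mul_right_comm, mul_assoc]
    _ = ∑' ε, ℓ ε * deltaE Γ ε := by
        simp_rw [← convR_intCast_eq_sum_support, hinv]
    _ = ℓ 1 := by
        rw [tsum_eq_single 1 fun ε hε => by simp [deltaE, hε]]
        simp [deltaE]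

lemma xi_eq_of_eq_Pmap (f : Γ →₀ ℤ) {finv : Γ → ℝ} (hfinv : Summable fun γ => ‖finv γ‖)
    (hinv : convR finv (fun γ => (f γ : ℝ)) = deltaE Γ)
    (L : (Γ → AddCircle (1 : ℝ)) → Γ → ℝ) (x : Γ → AddCircle (1 : ℝ)) {C : ℝ}
    (hC : ∀ γ, |L x γ| ≤ C) (hlift : ∀ γ, (L x γ : AddCircle (1 : ℝ)) = x γ)
    {h : Γ → ℤ} (hh : ∀ γ, (h γ : ℝ) = Pmap f L x γ) :
    xi finv h = x := by
  funext γ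
  have hP : ∑' β, (h (γ * β⁻¹) : ℝ) * finv β⁻¹ = L x γ := by
    rw [← (Equiv.inv Γ).tsum_eq]
    simp only [Equiv.inv_apply, inv_inv, hh, Pmap_eq_sum_support, mul_assoc]
    simpa using tsum_sum_support_mul_eq_apply_one f hfinv hinv (ℓ := fun ε => L x (γ * ε))
      fun ε => hC (γ * ε)
  rw [xi, hP, hlift]

end Convolution

theorem stmt4_general {Γ : Type*} [Group Γ] [DecidableEq Γ]
    (f : Γ →₀ ℤ) (finv : Γ → ℝ)
    (hfinv : Summable fun γ => ‖finv γ‖)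
    (h2 : convR finv (fun γ => (f γ : ℝ)) = deltaE Γ)
    (κ : ℝ) (hκ : κ ∈ Set.Icc (0 : ℝ) 1)
    (L : (Γ → AddCircle (1 : ℝ)) → Γ → ℝ)
    (hL : ∀ x γ, L x γ ∈ Set.Ico (-1 + κ) κ ∧
        ((L x γ : ℝ) : AddCircle (1 : ℝ)) = x γ) :
    ∀ x : Γ → AddCircle (1 : ℝ), (∀ γ, convT x (fstar f) γ = 0) →
      ∃ h : Γ → ℤ, (∀ γ, (h γ : ℝ) = Pmap f L x γ) ∧
        (∃ M : ℤ, ∀ γ, |h γ| ≤ M) ∧ xi finv h = x := by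
  intro x hx
  have hlift (γ : Γ) := (hL x γ).2
  have hbound (γ : Γ) : |L x γ| ≤ 1 := by
    obtain ⟨⟨hlo, hhi⟩, -⟩ := hL x γ
    exact abs_le.2 ⟨by linarith [hκ.1], by linarith [hκ.2]⟩
  have hint (γ : Γ) : ∃ n : ℤ, (n : ℝ) = Pmap f L x γ := by
    have hzero := (coe_Pmap f L x hlift γ).trans (hx γ)
    obtain ⟨n, hn⟩ := (AddCircle.coe_eq_zero_iff 1).1 hzero
    exact ⟨n, by simpa using hn⟩
  choose h hh using hint
  refine ⟨h, hh, ⟨∑ β ∈ (fstar f).support, |fstar f β|, fun γ => ?_⟩,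
    xi_eq_of_eq_Pmap f hfinv h2 L x hbound hlift hh⟩
  have hPbound := abs_Pmap_le f L x hbound γ
  rw [one_mul, ← hh] at hPbound
  exact_mod_cast hPbound

/-- With `f ∈ ℤΓ` invertible in `ℓ¹(Γ)`, `κ ∈ [0,1]` irrational and `L` the lift
of `𝕋^Γ` into `[-1+κ, κ)^Γ`, for every `x ∈ X_f` the function `P(x) = L(x)·f*`
is integer valued and `ξ(P(x)) = x`; in particular `ξ : ℓ∞(Γ,ℤ) → X_f` is onto. -/
theorem stmt4 {Γ : Type*} [Group Γ] [Countable Γ] [DecidableEq Γ]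
    (f : Γ →₀ ℤ) (finv : Γ → ℝ)
    (hfinv : Summable fun γ => ‖finv γ‖)
    (h1 : convR (fun γ => (f γ : ℝ)) finv = deltaE Γ)
    (h2 : convR finv (fun γ => (f γ : ℝ)) = deltaE Γ)
    (κ : ℝ) (hκirr : Irrational κ) (hκ : κ ∈ Set.Icc (0 : ℝ) 1)
    (L : (Γ → AddCircle (1 : ℝ)) → Γ → ℝ)
    (hL : ∀ x γ, L x γ ∈ Set.Ico (-1 + κ) κ ∧
        ((L x γ : ℝ) : AddCircle (1 : ℝ)) = x γ) :
    ∀ x : Γ → AddCircle (1 : ℝ), (∀ γ, convT x (fstar f) γ = 0) →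
      ∃ h : Γ → ℤ, (∀ γ, (h γ : ℝ) = Pmap f L x γ) ∧
        (∃ M : ℤ, ∀ γ, |h γ| ≤ M) ∧ xi finv h = x :=
  stmt4_general f finv hfinv h2 κ hκ L hL
end

section
/- Let X be a compact metric space on which a countable group Γ acts by homeomorphisms, and let Γ act on a standard probability space (Y, ν) preserving ν. Then the set of Γ-invariant Borel probability measures ω on X such that the action Γ ↷ (X, ω) is weakly contained in Γ ↷ (Y, ν) is closed in the weak* topology on the space of invariant measures. -/
/-!
Invariance passes to weak* limits because each `γ` acts continuously. For weak containment,
let `ω` be a limit of measures `ω'` in the set and `ψ` a finite observable on `(X, ω)`. Approximate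
each fibre of `ψ` by an open set with `ω`-null frontier (a thickening of an inner closed set);
choosing among these sets gives `ψ'` with `ω (ψ' ≠ ψ)` small that is continuous `ω`-a.e. As `ω` is
invariant, the window map `x ↦ (ψ' (w • x))_{w ∈ W}` is continuous `ω`-a.e. as well, so by the
portmanteau theorem its law under `ω'` tends to its law under `ω`. Simulating `ψ'` in `Y` for a
nearby `ω'` and passing from `ψ'` back to `ψ` (which costs at most `2 |W| ω (ψ' ≠ ψ)` in `ℓ¹`)
gives the required `φ`.
-/

open MeasureTheory
open scoped BigOperators

/-- `Γ ↷ (Y, ν)` weakly contains `Γ ↷ (Z, ζ)`: every finite observable of `Z`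
can be simulated in `Y` up to `ε` in the `ℓ¹`-distance of finite-window
distributions. -/
def WeaklyContainedIn {Γ Z Y : Type*} [Group Γ] [DecidableEq Γ]
    [MeasurableSpace Z] [MeasurableSpace Y] [MulAction Γ Z] [MulAction Γ Y]
    (ζ : Measure Z) (ν : Measure Y) : Prop :=
  ∀ (n : ℕ) (ψ : Z → Fin n), Measurable ψ →
    ∀ (W : Finset Γ) (ε : ℝ), 0 < ε →
      ∃ φ : Y → Fin n, Measurable φ ∧
        ∑ j : (W → Fin n),
          |(ν {y | ∀ w : W, φ ((w : Γ) • y) = j w}).toReal -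
              (ζ {z | ∀ w : W, ψ ((w : Γ) • z) = j w}).toReal| ≤ ε

open Filter Topology Set
open scoped ENNReal symmDiff

section Topology

variable {X Y : Type*} [TopologicalSpace X]

theorem eventually_mem_iff_of_notMem_frontier {s : Set X} {x : X} (hx : x ∉ frontier s) :
    ∀ᶠ y in 𝓝 x, (y ∈ s ↔ x ∈ s) := by
  by_cases hxs : x ∈ s
  · filter_upwards [mem_interior_iff_mem_nhds.1 ((mem_interior_iff_notMem_frontier hxs).2 hx)]
      with y hy using iff_of_true hy hxs
  · rw [← frontier_compl] at hx
    filter_upwards [mem_interior_iff_mem_nhds.1 ((mem_interior_iff_notMem_frontier hxs).2 hx)]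
      with y hy using iff_of_false hy hxs

theorem continuousAt_comp_mem_of_notMem_frontier [TopologicalSpace Y] {ι : Type*} [Finite ι]
    {U : ι → Set X} (g : (ι → Prop) → Y) {x : X} (hx : x ∉ ⋃ i, frontier (U i)) :
    ContinuousAt (fun y => g fun i => y ∈ U i) x := by
  have hpattern : ∀ᶠ y in 𝓝 x, (fun i => y ∈ U i) = fun i => x ∈ U i := by
    simp only [funext_iff, eq_iff_iff]
    exact eventually_all.2 fun i =>
      eventually_mem_iff_of_notMem_frontier fun hi => hx (mem_iUnion_of_mem i hi)
  exact continuousAt_const.congr (f := fun _ => g fun i => x ∈ U i)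
    (hpattern.mono fun y hy => by simp only [hy])

theorem frontier_preimage_subset_setOf_not_continuousAt [TopologicalSpace Y] [DiscreteTopology Y]
    (f : X → Y) (t : Set Y) : frontier (f ⁻¹' t) ⊆ {x | ¬ContinuousAt f x} := by
  intro x hx hfx
  have hfiber : f ⁻¹' {f x} ∈ 𝓝 x := hfx ((isOpen_discrete _).mem_nhds rfl)
  have hnotMem : ∀ s, f ⁻¹' {f x} ⊆ s → x ∉ frontier s := fun s hs hxs =>
    hxs.2 (mem_interior_iff_mem_nhds.2 (mem_of_superset hfiber hs))
  by_cases hxt : f x ∈ t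
  · exact hnotMem _ (fun y hy => by simp_all) hx
  · exact hnotMem (f ⁻¹' t)ᶜ (fun y hy => by simp_all) (by rwa [frontier_compl])

end Topology

section Approximation

variable {X : Type*} [PseudoMetricSpace X] [MeasurableSpace X] [BorelSpace X]
  (μ : Measure X) [IsFiniteMeasure μ]

theorem MeasurableSet.exists_isOpen_null_frontier_measure_symmDiff_lt {A : Set X}
    (hA : MeasurableSet A) {ε : ℝ≥0∞} (hε : ε ≠ 0) :
    ∃ U, IsOpen U ∧ μ (frontier U) = 0 ∧ μ (A ∆ U) < ε := by
  have hε2 : ε / 2 ≠ 0 := (ENNReal.half_pos hε).ne'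
  obtain ⟨C, hCA, hC, hAC⟩ := hA.exists_isClosed_sdiff_lt (measure_ne_top μ A) hε2
  have hthick : ∀ᶠ r in 𝓝[>] 0, μ (Metric.thickening r C) < μ C + ε / 2 :=
    (tendsto_measure_thickening_of_isClosed ⟨1, one_pos, measure_ne_top _ _⟩ hC).eventually_lt_const
      (ENNReal.lt_add_right (measure_ne_top μ C) hε2)
  obtain ⟨b, hb, hbsub⟩ := mem_nhdsGT_iff_exists_Ioo_subset.1 hthick
  obtain ⟨r, hr, hrnull⟩ := exists_null_frontier_thickening μ C hb
  have hCU : C ⊆ Metric.thickening r C := Metric.self_subset_thickening hr.1 C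
  have hUC : μ (Metric.thickening r C \ C) < ε / 2 := by
    rw [measure_sdiff hCU hC.measurableSet.nullMeasurableSet (measure_ne_top μ C),
      ENNReal.sub_lt_iff_lt_right (measure_ne_top μ C) (measure_mono hCU), add_comm]
    exact hbsub ⟨hr.1, hr.2⟩
  have hsub : A ∆ Metric.thickening r C ⊆ (A \ C) ∪ (Metric.thickening r C \ C) := by
    rintro x (⟨hxA, hxU⟩ | ⟨hxU, hxA⟩)
    exacts [Or.inl ⟨hxA, fun hxC => hxU (hCU hxC)⟩, Or.inr ⟨hxU, fun hxC => hxA (hCA hxC)⟩]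
  refine ⟨_, Metric.isOpen_thickening, hrnull, ?_⟩
  calc μ (A ∆ Metric.thickening r C) ≤ μ (A \ C) + μ (Metric.thickening r C \ C) :=
        (measure_mono hsub).trans (measure_union_le _ _)
    _ < ε / 2 + ε / 2 := ENNReal.add_lt_add hAC hUC
    _ = ε := ENNReal.add_halves ε

theorem Measurable.exists_ae_continuousAt_measureReal_ne_lt {β : Type*} [Fintype β]
    [MeasurableSpace β] [MeasurableSingletonClass β] [TopologicalSpace β] {ψ : X → β}
    (hψ : Measurable ψ) {ε : ℝ} (hε : 0 < ε) :
    ∃ ψ' : X → β, Measurable ψ' ∧ (∀ᵐ x ∂μ, ContinuousAt ψ' x) ∧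
      μ.real {x | ψ' x ≠ ψ x} < ε := by
  rcases isEmpty_or_nonempty X with hX | hX
  · exact ⟨ψ, hψ, ae_of_all _ isEmptyElim, by simpa using hε⟩
  have : Nonempty β := hX.map ψ
  obtain ⟨η, hη, hηε⟩ := exists_pos_mul_lt hε (Fintype.card β)
  choose U hUo hUf hψU using fun b =>
    (hψ (measurableSet_singleton b)).exists_isOpen_null_frontier_measure_symmDiff_lt μ
      (ENNReal.ofReal_pos.2 hη).ne'
  -- `ψ'` picks some `b` with `x ∈ U b`: it is locally constant off `⋃ b, frontier (U b)`, and it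
  -- equals `ψ x` unless `x` lies in some `(ψ ⁻¹' {b}) ∆ U b`.
  refine ⟨fun x => Classical.epsilon fun b => x ∈ U b, ?_, ?_, ?_⟩
  · exact (measurable_of_countable (Classical.epsilon : (β → Prop) → β)).comp
      (measurable_pi_lambda _ fun b => measurableSet_setOfPred.1 (hUo b).measurableSet)
  · filter_upwards [measure_eq_zero_iff_ae_notMem.1 (measure_iUnion_null hUf)] with x hx
    exact continuousAt_comp_mem_of_notMem_frontier _ hx
  have hsub : {x | Classical.epsilon (fun b => x ∈ U b) ≠ ψ x} ⊆ ⋃ b, (ψ ⁻¹' {b}) ∆ U b := by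
    intro x hx
    by_contra hxU
    simp only [mem_iUnion, mem_symmDiff, mem_preimage, mem_singleton_iff, not_exists] at hxU
    have hpattern : (fun b => x ∈ U b) = fun b => b = ψ x := by
      ext b
      have := hxU b
      rw [eq_comm]
      tauto
    exact hx (by rw [hpattern, Classical.epsilon_singleton])
  calc μ.real {x | Classical.epsilon (fun b => x ∈ U b) ≠ ψ x}
      ≤ ∑ b, μ.real ((ψ ⁻¹' {b}) ∆ U b) :=
        (measureReal_mono hsub).trans (measureReal_iUnion_fintype_le _)
    _ < ∑ _b : β, η := Finset.sum_lt_sum_of_nonempty Finset.univ_nonempty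
        fun b _ => ENNReal.toReal_lt_of_lt_ofReal (hψU b)
    _ = Fintype.card β * η := by simp
    _ < ε := hηε

end Approximation

section Law

variable {α α' α'' β : Type*} [MeasurableSpace α] [MeasurableSpace α'] [MeasurableSpace α'']
  [Fintype β]

def lawL1Dist (μ : Measure α) (f : α → β) (ν : Measure α') (g : α' → β) : ℝ :=
  ∑ b, |μ.real (f ⁻¹' {b}) - ν.real (g ⁻¹' {b})|

theorem lawL1Dist_triangle (μ : Measure α) (f : α → β) (ν : Measure α') (g : α' → β)
    (ρ : Measure α'') (h : α'' → β) :
    lawL1Dist μ f ρ h ≤ lawL1Dist μ f ν g + lawL1Dist ν g ρ h := by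
  rw [lawL1Dist, lawL1Dist, lawL1Dist, ← Finset.sum_add_distrib]
  exact Finset.sum_le_sum fun b _ => abs_sub_le _ _ _

theorem lawL1Dist_le_two_mul_measureReal_ne [MeasurableSpace β] [MeasurableSingletonClass β]
    (μ : Measure α) [IsFiniteMeasure μ] {f g : α → β} (hf : Measurable f) (hg : Measurable g) :
    lawL1Dist μ f μ g ≤ 2 * μ.real {x | f x ≠ g x} := by
  set D := {x | f x ≠ g x}
  have hterm : ∀ b, |μ.real (f ⁻¹' {b}) - μ.real (g ⁻¹' {b})| ≤
      μ.real (f ⁻¹' {b} ∩ D) + μ.real (g ⁻¹' {b} ∩ D) := by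
    intro b
    have hf_sub : f ⁻¹' {b} ⊆ g ⁻¹' {b} ∪ (f ⁻¹' {b} ∩ D) := fun x hx => by
      by_cases hgx : g x = b
      exacts [Or.inl hgx, Or.inr ⟨hx, fun h => hgx (h ▸ hx)⟩]
    have hg_sub : g ⁻¹' {b} ⊆ f ⁻¹' {b} ∪ (g ⁻¹' {b} ∩ D) := fun x hx => by
      by_cases hfx : f x = b
      exacts [Or.inl hfx, Or.inr ⟨hx, fun h => hfx (h.trans hx)⟩]
    have h₁ := (measureReal_mono (μ := μ) hf_sub).trans (measureReal_union_le _ _)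
    have h₂ := (measureReal_mono (μ := μ) hg_sub).trans (measureReal_union_le _ _)
    rw [abs_sub_le_iff]
    constructor <;> linarith [measureReal_nonneg (μ := μ) (s := f ⁻¹' {b} ∩ D),
      measureReal_nonneg (μ := μ) (s := g ⁻¹' {b} ∩ D)]
  have hpartition : ∀ {f : α → β}, Measurable f → ∑ b, μ.real (f ⁻¹' {b} ∩ D) = μ.real D := by
    intro f hf
    simp_rw [← measureReal_restrict_apply (hf (measurableSet_singleton _))]
    rw [sum_measureReal_preimage_singleton _ fun b _ => hf (measurableSet_singleton b)]
    simp
  calc lawL1Dist μ f μ g ≤ ∑ b, (μ.real (f ⁻¹' {b} ∩ D) + μ.real (g ⁻¹' {b} ∩ D)) :=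
        Finset.sum_le_sum fun b _ => hterm b
    _ = 2 * μ.real D := by rw [Finset.sum_add_distrib, hpartition hf, hpartition hg, two_mul]

end Law

theorem ProbabilityMeasure.tendsto_lawL1Dist_of_ae_continuousAt {X β : Type*}
    [TopologicalSpace X] [MeasurableSpace X] [OpensMeasurableSpace X] [HasOuterApproxClosed X]
    [Fintype β] [TopologicalSpace β] [DiscreteTopology β] {μ : ProbabilityMeasure X} {f : X → β}
    (hf : ∀ᵐ x ∂(μ : Measure X), ContinuousAt f x) :
    Tendsto (fun ν : ProbabilityMeasure X => lawL1Dist (ν : Measure X) f μ f) (𝓝 μ) (𝓝 0) := by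
  have hnull : ∀ b, (μ : Measure X) (frontier (f ⁻¹' {b})) = 0 := fun b =>
    measure_mono_null (frontier_preimage_subset_setOf_not_continuousAt f {b}) (ae_iff.1 hf)
  have hterm : ∀ b, Tendsto (fun ν : ProbabilityMeasure X =>
      |(ν : Measure X).real (f ⁻¹' {b}) - (μ : Measure X).real (f ⁻¹' {b})|) (𝓝 μ) (𝓝 0) := by
    intro b
    have h : Tendsto (fun ν : ProbabilityMeasure X => (ν : Measure X).real (f ⁻¹' {b})) (𝓝 μ)
        (𝓝 ((μ : Measure X).real (f ⁻¹' {b}))) :=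
      (ENNReal.tendsto_toReal (measure_ne_top _ _)).comp
        (ProbabilityMeasure.tendsto_measure_of_null_frontier_of_tendsto' tendsto_id (hnull b))
    simpa only [sub_self, abs_zero] using (h.sub_const ((μ : Measure X).real (f ⁻¹' {b}))).abs
  simpa only [lawL1Dist, Finset.sum_const_zero] using
    tendsto_finsetSum Finset.univ fun b _ => hterm b

theorem isClosed_setOf_map_eq {X : Type*} [TopologicalSpace X] [HasOuterApproxClosed X]
    [MeasurableSpace X] [BorelSpace X] {f : X → X} (hf : Continuous f) :
    IsClosed {μ : ProbabilityMeasure X | (μ : Measure X).map f = μ} := by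
  have h : {μ : ProbabilityMeasure X | (μ : Measure X).map f = μ} =
      {μ | μ.map hf.measurable.aemeasurable = μ} := by
    ext μ
    simp [← ProbabilityMeasure.toMeasure_injective.eq_iff]
  exact h ▸ isClosed_eq (ProbabilityMeasure.continuous_map hf) continuous_id

section Window

variable {Γ Z β : Type*} [Group Γ] [MulAction Γ Z]

def windowMap (ψ : Z → β) (W : Finset Γ) (z : Z) : W → β := fun w => ψ ((w : Γ) • z)

theorem windowMap_preimage_singleton (ψ : Z → β) (W : Finset Γ) (j : W → β) :
    windowMap ψ W ⁻¹' {j} = {z | ∀ w : W, ψ ((w : Γ) • z) = j w} := by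
  ext z
  simp [windowMap, funext_iff]

variable [MeasurableSpace Z]

theorem Measurable.windowMap [MeasurableSpace β] {ψ : Z → β} (hψ : Measurable ψ)
    (hact : ∀ γ : Γ, Measurable fun z : Z => γ • z) (W : Finset Γ) :
    Measurable (windowMap ψ W) :=
  measurable_pi_lambda _ fun w => hψ.comp (hact w)

theorem ae_continuousAt_windowMap [TopologicalSpace Z] [TopologicalSpace β] {μ : Measure Z}
    (hcont : ∀ γ : Γ, Continuous fun z : Z => γ • z)
    (hpres : ∀ γ : Γ, MeasurePreserving (fun z : Z => γ • z) μ μ) {ψ : Z → β}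
    (hψ : ∀ᵐ z ∂μ, ContinuousAt ψ z) (W : Finset Γ) :
    ∀ᵐ z ∂μ, ContinuousAt (windowMap ψ W) z := by
  have hshift : ∀ w : W, ∀ᵐ z ∂μ, ContinuousAt ψ ((w : Γ) • z) := fun w =>
    (hpres w).quasiMeasurePreserving.ae hψ
  filter_upwards [ae_all_iff.2 hshift] with z hz
  exact continuousAt_pi.2 fun w => (hz w).comp (hcont w).continuousAt

theorem measureReal_windowMap_ne_le {μ : Measure Z} [IsFiniteMeasure μ]
    (hpres : ∀ γ : Γ, MeasurePreserving (fun z : Z => γ • z) μ μ) (ψ ψ' : Z → β) (W : Finset Γ) :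
    μ.real {z | windowMap ψ W z ≠ windowMap ψ' W z} ≤ W.card * μ.real {z | ψ z ≠ ψ' z} := by
  have hsub : {z | windowMap ψ W z ≠ windowMap ψ' W z} ⊆
      ⋃ w : W, (fun z : Z => (w : Γ) • z) ⁻¹' {z | ψ z ≠ ψ' z} := by
    intro z hz
    obtain ⟨w, hw⟩ := Function.ne_iff.1 hz
    exact mem_iUnion.2 ⟨w, hw⟩
  calc μ.real {z | windowMap ψ W z ≠ windowMap ψ' W z}
      ≤ ∑ w : W, μ.real ((fun z : Z => (w : Γ) • z) ⁻¹' {z | ψ z ≠ ψ' z}) :=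
        (measureReal_mono hsub).trans (measureReal_iUnion_fintype_le _)
    _ ≤ ∑ _w : W, μ.real {z | ψ z ≠ ψ' z} := Finset.sum_le_sum fun w _ =>
        ENNReal.toReal_mono (measure_ne_top _ _) ((hpres w).measure_preimage_le _)
    _ = W.card * μ.real {z | ψ z ≠ ψ' z} := by simp

theorem lawL1Dist_windowMap_le [DecidableEq Γ] [Fintype β] [MeasurableSpace β]
    [MeasurableSingletonClass β] {μ : Measure Z} [IsFiniteMeasure μ]
    (hact : ∀ γ : Γ, Measurable fun z : Z => γ • z)
    (hpres : ∀ γ : Γ, MeasurePreserving (fun z : Z => γ • z) μ μ) {ψ ψ' : Z → β}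
    (hψ : Measurable ψ) (hψ' : Measurable ψ') (W : Finset Γ) :
    lawL1Dist μ (windowMap ψ W) μ (windowMap ψ' W) ≤ 2 * (W.card * μ.real {z | ψ z ≠ ψ' z}) :=
  (lawL1Dist_le_two_mul_measureReal_ne μ (hψ.windowMap hact W) (hψ'.windowMap hact W)).trans
    (mul_le_mul_of_nonneg_left (measureReal_windowMap_ne_le hpres ψ ψ' W) zero_le_two)

end Window

theorem weaklyContainedIn_iff_lawL1Dist {Γ Z Y : Type*} [Group Γ] [DecidableEq Γ]
    [MeasurableSpace Z] [MeasurableSpace Y] [MulAction Γ Z] [MulAction Γ Y]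
    (ζ : Measure Z) (ν : Measure Y) :
    WeaklyContainedIn (Γ := Γ) ζ ν ↔
      ∀ (n : ℕ) (ψ : Z → Fin n), Measurable ψ → ∀ (W : Finset Γ) (ε : ℝ), 0 < ε →
        ∃ φ : Y → Fin n, Measurable φ ∧ lawL1Dist ν (windowMap φ W) ζ (windowMap ψ W) ≤ ε := by
  simp only [WeaklyContainedIn, lawL1Dist, windowMap_preimage_singleton, measureReal_def]

theorem stmt9_general {Γ X Y : Type*} [Group Γ] [DecidableEq Γ]
    [MetricSpace X] [MeasurableSpace X] [BorelSpace X]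
    [MulAction Γ X] (hcont : ∀ γ : Γ, Continuous fun x : X => γ • x)
    [MeasurableSpace Y] [MulAction Γ Y]
    (ν : Measure Y) :
    IsClosed {ω : ProbabilityMeasure X |
      (∀ γ : Γ, (ω : Measure X).map (fun x => γ • x) = ω) ∧
      WeaklyContainedIn (Γ := Γ) (ω : Measure X) ν} := by
  refine isClosed_of_closure_subset fun ω hω => ?_
  have hinv : ∀ γ : Γ, (ω : Measure X).map (γ • ·) = ω := fun γ =>
    closure_minimal (fun _ h => h.1 γ) (isClosed_setOf_map_eq (hcont γ)) hω
  have hpres : ∀ γ : Γ, MeasurePreserving (γ • ·) (ω : Measure X) ω := fun γ =>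
    ⟨(hcont γ).measurable, hinv γ⟩
  have hact : ∀ γ : Γ, Measurable fun x : X => γ • x := fun γ => (hcont γ).measurable
  refine ⟨hinv, (weaklyContainedIn_iff_lawL1Dist _ _).2 fun n ψ hψ W ε hε => ?_⟩
  have hε3 : 0 < ε / 3 := by positivity
  obtain ⟨δ, hδ, hδε⟩ := exists_pos_mul_lt hε3 (2 * W.card)
  obtain ⟨ψ', hψ'm, hψ'c, hψ'ψ⟩ := hψ.exists_ae_continuousAt_measureReal_ne_lt (ω : Measure X) hδ
  have hnear : ∀ᶠ ω' : ProbabilityMeasure X in 𝓝 ω,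
      lawL1Dist (ω' : Measure X) (windowMap ψ' W) ω (windowMap ψ' W) < ε / 3 :=
    (ProbabilityMeasure.tendsto_lawL1Dist_of_ae_continuousAt
      (ae_continuousAt_windowMap hcont hpres hψ'c W)).eventually (gt_mem_nhds hε3)
  obtain ⟨ω', ⟨-, hω'⟩, hω'ω⟩ := ((mem_closure_iff_frequently.1 hω).and_eventually hnear).exists
  obtain ⟨φ, hφ, hφω'⟩ := (weaklyContainedIn_iff_lawL1Dist _ _).1 hω' n ψ' hψ'm W _ hε3
  refine ⟨φ, hφ, ?_⟩
  calc lawL1Dist ν (windowMap φ W) ω (windowMap ψ W)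
      ≤ lawL1Dist ν (windowMap φ W) ω' (windowMap ψ' W) +
          (lawL1Dist (ω' : Measure X) (windowMap ψ' W) ω (windowMap ψ' W) +
            lawL1Dist (ω : Measure X) (windowMap ψ' W) ω (windowMap ψ W)) :=
        (lawL1Dist_triangle _ _ _ _ _ _).trans (add_le_add le_rfl (lawL1Dist_triangle _ _ _ _ _ _))
    _ ≤ ε / 3 + (ε / 3 + 2 * (W.card * δ)) :=
        add_le_add hφω' (add_le_add hω'ω.le
          ((lawL1Dist_windowMap_le hact hpres hψ'm hψ W).trans (by gcongr)))
    _ ≤ ε := by linarith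

/-- If a countable group `Γ` acts by homeomorphisms on a compact metric space `X`
and acts measure-preservingly on a standard probability space `(Y, ν)`, then the
set of `Γ`-invariant Borel probability measures `ω` on `X` for which `Γ ↷ (X, ω)`
is weakly contained in `Γ ↷ (Y, ν)` is weak*-closed. -/
theorem stmt9 {Γ X Y : Type*} [Group Γ] [Countable Γ] [DecidableEq Γ]
    [MetricSpace X] [CompactSpace X] [MeasurableSpace X] [BorelSpace X]
    [MulAction Γ X] (hcont : ∀ γ : Γ, Continuous fun x : X => γ • x)
    [MeasurableSpace Y] [MulAction Γ Y]
    (ν : Measure Y) [IsProbabilityMeasure ν]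
    (hν : ∀ γ : Γ, MeasurePreserving (fun y : Y => γ • y) ν ν) :
    IsClosed {ω : ProbabilityMeasure X |
      (∀ γ : Γ, (ω : Measure X).map (fun x => γ • x) = ω) ∧
      WeaklyContainedIn (Γ := Γ) (ω : Measure X) ν} :=
  stmt9_general hcont ν
end

section
/- Strong ergodicity is preserved under weak equivalence: if Γ ↷ (Y, ν) is weakly equivalent to Γ ↷ (Z, ζ) and Γ ↷ (Z, ζ) is strongly ergodic, then Γ ↷ (Y, ν) is strongly ergodic. -/
open MeasureTheory Filter
open scoped BigOperators Pointwise symmDiff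

section aux

variable {Γ Y : Type*} [Group Γ] [DecidableEq Γ] [MeasurableSpace Y] [MulAction Γ Y]

lemma cell_measurable (W : Finset Γ) (φ : Y → Fin 2) (hφ : Measurable φ)
    (hmeas : ∀ γ : Γ, Measurable fun y : Y => γ • y) (j : W → Fin 2) :
    MeasurableSet {y : Y | ∀ w : W, φ ((w : Γ) • y) = j w} := by
  have h : {y : Y | ∀ w : W, φ ((w : Γ) • y) = j w}
      = ⋂ w : W, (fun y : Y => φ ((w : Γ) • y)) ⁻¹' {j w} := by
    ext y; simp [Set.mem_iInter]
  rw [h]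
  exact MeasurableSet.iInter fun w =>
    (hφ.comp (hmeas (w : Γ))) (measurableSet_singleton (j w))

lemma meas_pattern (ν : Measure Y) (W : Finset Γ) (φ : Y → Fin 2) (hφ : Measurable φ)
    (hmeas : ∀ γ : Γ, Measurable fun y : Y => γ • y)
    (P : (W → Fin 2) → Prop) [DecidablePred P] :
    ν {y : Y | P fun w : W => φ ((w : Γ) • y)}
      = ∑ j ∈ Finset.univ.filter P, ν {y : Y | ∀ w : W, φ ((w : Γ) • y) = j w} := by
  have hset : {y : Y | P fun w : W => φ ((w : Γ) • y)}
      = ⋃ j ∈ Finset.univ.filter P, {y : Y | ∀ w : W, φ ((w : Γ) • y) = j w} := by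
    ext y
    simp only [Set.mem_setOf_eq, Set.mem_iUnion, Finset.mem_filter, Finset.mem_univ, true_and,
      exists_prop]
    constructor
    · intro h
      exact ⟨fun w => φ ((w : Γ) • y), h, fun w => rfl⟩
    · rintro ⟨j, hj, hcell⟩
      have : (fun w : W => φ ((w : Γ) • y)) = j := funext hcell
      rwa [this]
  rw [hset]
  refine measure_biUnion_finset ?_ ?_
  · intro j _ j' _ hne
    rw [Function.onFun, Set.disjoint_left]
    intro y hy hy'
    exact hne (funext fun w => (hy w).symm.trans (hy' w))
  · exact fun j _ => cell_measurable W φ hφ hmeas j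

end aux

section key

variable {Γ Z Y : Type*} [Group Γ] [DecidableEq Γ] [MeasurableSpace Z] [MeasurableSpace Y]
  [MulAction Γ Z] [MulAction Γ Y]

lemma pattern_diff_le (ν : Measure Y) [IsProbabilityMeasure ν]
    (ζ : Measure Z) [IsProbabilityMeasure ζ]
    (hmY : ∀ γ : Γ, Measurable fun y : Y => γ • y)
    (hmZ : ∀ γ : Γ, Measurable fun z : Z => γ • z)
    (W : Finset Γ) (ψ : Y → Fin 2) (hψ : Measurable ψ) (φ : Z → Fin 2) (hφ : Measurable φ)
    {ε : ℝ}
    (hsum : ∑ j : (W → Fin 2),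
      |(ζ {z | ∀ w : W, φ ((w : Γ) • z) = j w}).toReal -
          (ν {y | ∀ w : W, ψ ((w : Γ) • y) = j w}).toReal| ≤ ε)
    (P : (W → Fin 2) → Prop) [DecidablePred P] :
    |(ζ {z : Z | P fun w : W => φ ((w : Γ) • z)}).toReal -
        (ν {y : Y | P fun w : W => ψ ((w : Γ) • y)}).toReal| ≤ ε := by
  rw [meas_pattern ζ W φ hφ hmZ P, meas_pattern ν W ψ hψ hmY P,
    ENNReal.toReal_sum (fun j _ => measure_ne_top ζ _),
    ENNReal.toReal_sum (fun j _ => measure_ne_top ν _), ← Finset.sum_sub_distrib]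
  calc |∑ j ∈ Finset.univ.filter P,
        ((ζ {z | ∀ w : W, φ ((w : Γ) • z) = j w}).toReal -
          (ν {y | ∀ w : W, ψ ((w : Γ) • y) = j w}).toReal)|
      ≤ ∑ j ∈ Finset.univ.filter P,
        |(ζ {z | ∀ w : W, φ ((w : Γ) • z) = j w}).toReal -
          (ν {y | ∀ w : W, ψ ((w : Γ) • y) = j w}).toReal| := Finset.abs_sum_le_sum_abs _ _
    _ ≤ ∑ j : (W → Fin 2),
        |(ζ {z | ∀ w : W, φ ((w : Γ) • z) = j w}).toReal -
          (ν {y | ∀ w : W, ψ ((w : Γ) • y) = j w}).toReal| :=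
        Finset.sum_le_sum_of_subset_of_nonneg (Finset.filter_subset _ _)
          (fun j _ _ => abs_nonneg _)
    _ ≤ ε := hsum

end key

/-- Strong ergodicity: there is no nontrivial asymptotically invariant sequence
of Borel sets. -/
def StronglyErgodic {Γ Y : Type*} [Group Γ] [MeasurableSpace Y] [MulAction Γ Y]
    (ν : Measure Y) : Prop :=
  ¬ ∃ A : ℕ → Set Y, (∀ i, MeasurableSet (A i)) ∧
    (∀ γ : Γ, Tendsto (fun i => (ν (A i ∆ (γ • A i))).toReal) atTop (nhds 0)) ∧
    0 < limsup (fun i => (ν (A i)).toReal * (1 - (ν (A i)).toReal)) atTop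

/-- Strong ergodicity is preserved under weak equivalence. -/
theorem stmt13 {Γ Z Y : Type*} [Group Γ] [Countable Γ] [DecidableEq Γ]
    [MeasurableSpace Z] [MeasurableSpace Y] [MulAction Γ Z] [MulAction Γ Y]
    (ν : Measure Y) [IsProbabilityMeasure ν]
    (ζ : Measure Z) [IsProbabilityMeasure ζ]
    (hν : ∀ γ : Γ, MeasurePreserving (fun y : Y => γ • y) ν ν)
    (hζ : ∀ γ : Γ, MeasurePreserving (fun z : Z => γ • z) ζ ζ)
    (h1 : WeaklyContainedIn (Γ := Γ) ζ ν)
    (h2 : WeaklyContainedIn (Γ := Γ) ν ζ)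
    (hse : StronglyErgodic (Γ := Γ) ζ) :
    StronglyErgodic (Γ := Γ) ν := by
  classical
  rintro ⟨A, hA, hAI, hpos⟩
  have hmY : ∀ γ : Γ, Measurable fun y : Y => γ • y := fun γ => (hν γ).measurable
  have hmZ : ∀ γ : Γ, Measurable fun z : Z => γ • z := fun γ => (hζ γ).measurable
  -- the limsup
  set c : ℝ := limsup (fun i => (ν (A i)).toReal * (1 - (ν (A i)).toReal)) atTop with hc_def
  have hc : 0 < c := hpos
  -- enumeration of Γ
  obtain ⟨f, hf⟩ := exists_surjective_nat Γ
  -- windows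
  set W : ℕ → Finset Γ := fun i => insert (1 : Γ)
    (((Finset.range (i + 1)).image f) ∪ ((Finset.range (i + 1)).image fun k => (f k)⁻¹))
    with hW_def
  have h1W : ∀ i, (1 : Γ) ∈ W i := fun i => Finset.mem_insert_self _ _
  have hfW : ∀ {k i : ℕ}, k ≤ i → f k ∈ W i := by
    intro k i hk
    exact Finset.mem_insert_of_mem (Finset.mem_union_left _
      (Finset.mem_image.2 ⟨k, Finset.mem_range.2 (Nat.lt_succ_of_le hk), rfl⟩))
  have hfW' : ∀ {k i : ℕ}, k ≤ i → (f k)⁻¹ ∈ W i := by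
    intro k i hk
    exact Finset.mem_insert_of_mem (Finset.mem_union_right _
      (Finset.mem_image.2 ⟨k, Finset.mem_range.2 (Nat.lt_succ_of_le hk), rfl⟩))
  -- nonnegativity and boundedness of the ν-values
  have htR : ∀ i, (ν (A i)).toReal ∈ Set.Icc (0:ℝ) 1 := by
    intro i
    refine ⟨ENNReal.toReal_nonneg, ?_⟩
    have := prob_le_one (μ := ν) (s := A i)
    simpa using ENNReal.toReal_mono (by simp) this
  -- frequently the nontriviality is at least c/2
  have hfreq : ∃ᶠ m in atTop, c / 2 < (ν (A m)).toReal * (1 - (ν (A m)).toReal) := by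
    refine frequently_lt_of_lt_limsup ?_ (by linarith)
    refine isCoboundedUnder_le_of_le atTop (x := 0) ?_
    intro m
    have h := htR m
    nlinarith [h.1, h.2]
  -- select indices
  have hsel : ∀ i : ℕ, ∃ m : ℕ,
      (c / 2 < (ν (A m)).toReal * (1 - (ν (A m)).toReal)) ∧
      ∀ γ ∈ W i, (ν (A m ∆ (γ • A m))).toReal ≤ 1 / (i + 1) := by
    intro i
    have hev : ∀ᶠ m in atTop, ∀ γ ∈ W i, (ν (A m ∆ (γ • A m))).toReal ≤ 1 / (i + 1) := by
      rw [eventually_all_finset]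
      intro γ _
      exact (hAI γ).eventually (eventually_le_nhds (by positivity))
    exact (hfreq.and_eventually hev).exists
  choose n hn1 hn2 using hsel
  -- observables on Y
  set ψ : ℕ → Y → Fin 2 := fun i y => if y ∈ A (n i) then 1 else 0 with hψ_def
  have hψm : ∀ i, Measurable (ψ i) := fun i =>
    Measurable.ite (hA (n i)) measurable_const measurable_const
  -- transport via weak containment
  have hex : ∀ i : ℕ, ∃ φ : Z → Fin 2, Measurable φ ∧
      ∑ j : (W i → Fin 2),
        |(ζ {z | ∀ w : W i, φ ((w : Γ) • z) = j w}).toReal -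
            (ν {y | ∀ w : W i, ψ i ((w : Γ) • y) = j w}).toReal| ≤ 1 / (i + 1) :=
    fun i => h2 2 (ψ i) (hψm i) (W i) (1 / (i + 1)) (by positivity)
  choose φ hφm hφsum using hex
  set B : ℕ → Set Z := fun i => (φ i) ⁻¹' {1} with hB_def
  have hBm : ∀ i, MeasurableSet (B i) := fun i => (hφm i) (measurableSet_singleton 1)
  -- comparison of measures via patterns
  have hAB : ∀ i, |(ζ (B i)).toReal - (ν (A (n i))).toReal| ≤ 1 / (i + 1) := by
    intro i
    have key := pattern_diff_le ν ζ hmY hmZ (W i) (ψ i) (hψm i) (φ i) (hφm i) (hφsum i)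
      (fun j => j ⟨1, h1W i⟩ = 1)
    have e1 : {z : Z | (fun w : W i => φ i ((w : Γ) • z)) ⟨1, h1W i⟩ = 1} = B i := by
      ext z; simp [hB_def, one_smul]
    have e2 : {y : Y | (fun w : W i => ψ i ((w : Γ) • y)) ⟨1, h1W i⟩ = 1} = A (n i) := by
      ext y
      by_cases hy : y ∈ A (n i) <;> simp [hψ_def, one_smul, hy]
    rw [e1, e2] at key
    exact key
  have hsymm : ∀ (k i : ℕ), k ≤ i →
      |(ζ (B i ∆ (f k • B i))).toReal - (ν (A (n i) ∆ (f k • A (n i)))).toReal| ≤ 1 / (i + 1) := by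
    intro k i hk
    have key := pattern_diff_le ν ζ hmY hmZ (W i) (ψ i) (hψm i) (φ i) (hφm i) (hφsum i)
      (fun j => ¬ j ⟨1, h1W i⟩ = j ⟨(f k)⁻¹, hfW' hk⟩)
    have fin2 : ∀ a b : Fin 2, (¬ a = b ↔ (a = 1 ∧ ¬ b = 1) ∨ (b = 1 ∧ ¬ a = 1)) := by decide
    have e1 : {z : Z | ¬ (fun w : W i => φ i ((w : Γ) • z)) ⟨1, h1W i⟩ =
        (fun w : W i => φ i ((w : Γ) • z)) ⟨(f k)⁻¹, hfW' hk⟩} = B i ∆ (f k • B i) := by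
      ext z
      simp only [Set.mem_setOf_eq, one_smul, Set.mem_symmDiff, hB_def, Set.mem_preimage,
        Set.mem_singleton_iff, Set.mem_smul_set_iff_inv_smul_mem]
      exact fin2 _ _
    have e2 : {y : Y | ¬ (fun w : W i => ψ i ((w : Γ) • y)) ⟨1, h1W i⟩ =
        (fun w : W i => ψ i ((w : Γ) • y)) ⟨(f k)⁻¹, hfW' hk⟩} = A (n i) ∆ (f k • A (n i)) := by
      ext y
      simp only [Set.mem_setOf_eq, one_smul, Set.mem_symmDiff,
        Set.mem_smul_set_iff_inv_smul_mem]
      by_cases hy : y ∈ A (n i) <;> by_cases hy' : (f k)⁻¹ • y ∈ A (n i) <;>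
        simp [hψ_def, hy, hy']
    rw [e1, e2] at key
    exact key
  -- contradiction with strong ergodicity of ζ
  refine hse ⟨B, hBm, ?_, ?_⟩
  · intro γ
    obtain ⟨k, rfl⟩ := hf γ
    have hbound : ∀ᶠ i in atTop, (ζ (B i ∆ (f k • B i))).toReal ≤ 2 / (i + 1) := by
      filter_upwards [eventually_ge_atTop k] with i hk
      have h1' := hsymm k i hk
      have h2' := hn2 i (f k) (hfW hk)
      have := abs_le.1 h1'
      have : (ζ (B i ∆ (f k • B i))).toReal ≤ (ν (A (n i) ∆ (f k • A (n i)))).toReal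
          + 1 / (i + 1) := by linarith [this.2]
      calc (ζ (B i ∆ (f k • B i))).toReal ≤ 1 / (i + 1) + 1 / (i + 1) := by linarith
        _ = 2 / (i + 1) := by ring
    have hlim : Tendsto (fun i : ℕ => 2 / ((i : ℝ) + 1)) atTop (nhds 0) :=
      Tendsto.div_atTop tendsto_const_nhds (tendsto_atTop_add_const_right _ 1
        tendsto_natCast_atTop_atTop)
    exact squeeze_zero' (Eventually.of_forall fun i => ENNReal.toReal_nonneg) hbound hlim
  · have huR : ∀ i, (ζ (B i)).toReal ∈ Set.Icc (0:ℝ) 1 := by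
      intro i
      refine ⟨ENNReal.toReal_nonneg, ?_⟩
      have := prob_le_one (μ := ζ) (s := B i)
      simpa using ENNReal.toReal_mono (by simp) this
    have heps : ∀ᶠ i : ℕ in atTop, 1 / ((i : ℝ) + 1) ≤ c / 4 := by
      have hlim : Tendsto (fun i : ℕ => 1 / ((i : ℝ) + 1)) atTop (nhds 0) :=
        Tendsto.div_atTop tendsto_const_nhds (tendsto_atTop_add_const_right _ 1
          tendsto_natCast_atTop_atTop)
      exact hlim.eventually (eventually_le_nhds (by linarith))
    have hfreq' : ∃ᶠ i in atTop,
        c / 4 ≤ (ζ (B i)).toReal * (1 - (ζ (B i)).toReal) := by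
      refine Eventually.frequently ?_
      filter_upwards [heps] with i hi
      have h1' := hAB i
      have h2' := hn1 i
      have hu := huR i
      have hv := htR (n i)
      have := abs_le.1 h1'
      nlinarith [this.1, this.2, hu.1, hu.2, hv.1, hv.2]
    have hub : IsBoundedUnder (· ≤ ·) atTop
        (fun i => (ζ (B i)).toReal * (1 - (ζ (B i)).toReal)) := by
      refine isBoundedUnder_of ⟨1, fun i => ?_⟩
      have hu := huR i
      nlinarith [hu.1, hu.2]
    have := le_limsup_of_frequently_le hfreq' hub
    linarith
end

section
/- Let Γ be a residually finite countable group, (Γ_i) a sequence of finite-index subgroups with ⋂_{n≥1} ⋃_{i≥n} Γ_i = {e}, and f ∈ ℤΓ invertible in ℓ¹(Γ). Let ρ_n be the uniform probability measure on the finite set Fix(Γ_n, X_f). Then ρ_n converges to the Haar measure μ_f on X_f in the weak* topology. -/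
open scoped BigOperators

open MeasureTheory Filter
open scoped ENNReal

/-!
For `y ∈ X_f`, lift `y` to a bounded real function `x`; then `h = x·f*` is integer-valued.
Copying the values of `h` on a growing transversal of `Γ_i \ Γ` gives `Γ_i`-invariant,
integer-valued `h_i` with `h_i → h` pointwise, so `z_i = h_i·f⁻¹ mod 1` are `Γ_i`-periodic points
of `X_f`, and `z_i → y` because `f⁻¹ ∈ ℓ¹(Γ)`.

Since `μ_f` is invariant under translation by `X_f ⊇ supp ρ_n`, Fubini gives
`∫ c dρ_n - ∫ c dμ_f = ∫ (∫ c dρ_n - ∫ c(· + y) dρ_n) dμ_f(y)`. As `ρ_n` is invariant under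
translation by `z_n ∈ Fix(Γ_n, X_f)`, the integrand at `y` is bounded by the translation modulus of
`c` at `y - z_n → 0`; dominated convergence concludes.
-/

open scoped Topology

local notation "𝕋" => AddCircle (1 : ℝ)

section RightConvolution

variable {Γ : Type*} [Group Γ]

/-- For `w = f` this is the paper's `H·f*`. -/
noncomputable def rightConv (w H : Γ → ℝ) : Γ → ℝ :=
  fun γ => ∑' α, w α * H (γ * α)

variable {w v H : Γ → ℝ} {M : ℝ}

lemma abs_rightConv_le (hw : Summable fun α => ‖w α‖) (hH : ∀ γ, |H γ| ≤ M) (γ : Γ) :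
    |rightConv w H γ| ≤ (∑' α, ‖w α‖) * M := by
  rw [← Real.norm_eq_abs]
  refine tsum_of_norm_bounded (hw.hasSum.mul_right M) fun α => ?_
  rw [norm_mul, Real.norm_eq_abs (H _)]
  exact mul_le_mul_of_nonneg_left (hH _) (norm_nonneg _)

lemma rightConv_rightConv (hw : Summable fun α => ‖w α‖) (hv : Summable fun α => ‖v α‖)
    (hH : ∀ γ, |H γ| ≤ M) : rightConv w (rightConv v H) = rightConv (convR w v) H := by
  funext γ
  set g : Γ → Γ → ℝ := fun α δ => w α * v (α⁻¹ * δ) * H (γ * δ)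
  have hg : Summable (Function.uncurry g) := by
    have hwv : Summable fun p : Γ × Γ => ‖w p.1‖ * ‖v (p.1⁻¹ * p.2)‖ := by
      let e : Γ × Γ ≃ Γ × Γ :=
        { toFun := fun p => (p.1, p.1⁻¹ * p.2), invFun := fun p => (p.1, p.1 * p.2),
          left_inv := fun p => by simp, right_inv := fun p => by simp }
      exact (summable_mul_of_summable_norm (f := fun α => ‖w α‖) (g := fun α => ‖v α‖)
        (by simpa using hw) (by simpa using hv)).comp_injective e.injective
    refine Summable.of_norm_bounded (hwv.mul_right M) fun p => ?_
    simp only [Function.uncurry, g, norm_mul, Real.norm_eq_abs (H _)]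
    exact mul_le_mul_of_nonneg_left (hH _) (by positivity)
  calc rightConv w (rightConv v H) γ = ∑' α, ∑' δ, g α δ := by
        refine tsum_congr fun α => ?_
        rw [rightConv, ← tsum_mul_left, ← (Equiv.mulLeft α⁻¹).tsum_eq]
        refine tsum_congr fun δ => ?_
        simp only [g, Equiv.coe_mulLeft, mul_assoc, mul_inv_cancel_left]
    _ = ∑' δ, ∑' α, g α δ := hg.tsum_comm.symm
    _ = rightConv (convR w v) H γ := by
        refine tsum_congr fun δ => ?_
        rw [convR, ← tsum_mul_right]

lemma rightConv_deltaE [DecidableEq Γ] : rightConv (deltaE Γ) H = H := by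
  funext γ
  rw [rightConv, tsum_eq_single 1 fun α hα => by simp [deltaE, hα]]
  simp [deltaE]

lemma tendsto_rightConv {ι : Type*} {l : Filter ι} {Hs : ι → Γ → ℝ}
    (hw : Summable fun α => ‖w α‖) (hHs : ∀ i γ, |Hs i γ| ≤ M)
    (hlim : ∀ γ, Tendsto (Hs · γ) l (𝓝 (H γ))) (γ : Γ) :
    Tendsto (fun i => rightConv w (Hs i) γ) l (𝓝 (rightConv w H γ)) := by
  refine tendsto_tsum_of_dominated_convergence (hw.mul_right M)
    (fun α => (hlim (γ * α)).const_mul (w α)) (Eventually.of_forall fun i α => ?_)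
  rw [norm_mul, Real.norm_eq_abs (Hs _ _)]
  exact mul_le_mul_of_nonneg_left (hHs _ _) (norm_nonneg _)

end RightConvolution

section Torus

variable {Γ : Type*} [Group Γ]

lemma convT_fstar_coe (f : Γ →₀ ℤ) (x : Γ → ℝ) (γ : Γ) :
    convT (fun γ => (x γ : 𝕋)) (fstar f) γ = (rightConv (fun β => (f β : ℝ)) x γ : 𝕋) := by
  rw [rightConv, tsum_eq_sum (s := f.support) fun α hα => by simp [Finsupp.notMem_support_iff.1 hα]]
  change Finsupp.sum (fstar f) (fun β n => n • ((x (γ * β⁻¹) : ℝ) : 𝕋)) = _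
  rw [fstar, Finsupp.sum_equivMapDomain, Finsupp.sum]
  simp only [Equiv.inv_apply, inv_inv, ← zsmul_eq_mul]
  exact (map_sum (QuotientAddGroup.mk' (AddSubgroup.zmultiples (1 : ℝ))) _ _).symm

lemma isClosed_setOf_convT_eq_zero (g : Γ →₀ ℤ) : IsClosed {x : Γ → 𝕋 | ∀ γ, convT x g γ = 0} := by
  simp only [Set.ofPred_forall]
  exact isClosed_iInter fun γ => isClosed_eq (by unfold convT; fun_prop) continuous_const

lemma convT_add (x y : Γ → 𝕋) (g : Γ →₀ ℤ) : convT (x + y) g = convT x g + convT y g := by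
  funext γ; simp [convT, smul_add, Finset.sum_add_distrib]

lemma convT_neg (x : Γ → 𝕋) (g : Γ →₀ ℤ) : convT (-x) g = -convT x g := by
  funext γ; simp [convT]

def periodicPoints (f : Γ →₀ ℤ) (Λ : Subgroup Γ) : AddSubgroup (Γ → 𝕋) where
  carrier := {x | (∀ γ, convT x (fstar f) γ = 0) ∧ ∀ g ∈ Λ, ∀ γ, x (g⁻¹ * γ) = x γ}
  add_mem' {x y} hx hy := ⟨fun γ => by simp [convT_add, hx.1 γ, hy.1 γ],
    fun g hg γ => by simp [hx.2 g hg γ, hy.2 g hg γ]⟩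
  zero_mem' := ⟨fun γ => by simp [convT], fun _ _ _ => rfl⟩
  neg_mem' {x} hx := ⟨fun γ => by simp [convT_neg, hx.1 γ], fun g hg γ => by simp [hx.2 g hg γ]⟩

end Torus

section Approximation

lemma eventually_notMem_of_notMem_iInter_iUnion {α : Type*} {s : ℕ → Set α} {x : α}
    (hx : x ∉ ⋂ n, ⋃ i, ⋃ (_ : n ≤ i), s i) : ∀ᶠ i in atTop, x ∉ s i := by
  simp only [Set.mem_iInter, Set.mem_iUnion, not_forall, not_exists] at hx
  obtain ⟨n, hn⟩ := hx
  exact eventually_atTop.2 ⟨n, hn⟩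

variable {Γ : Type*} [Group Γ]

/-- Take `H i γ := h δ` for the first element `δ` of the coset `Λ i γ` in an enumeration of `Γ`:
for large `i`, `Λ i` misses the finitely many `δ γ⁻¹ ≠ 1` with `δ` enumerated before `γ`. -/
lemma exists_invariant_eventually_eq [Countable Γ] {α : Type*} {Λ : ℕ → Subgroup Γ}
    (hΛ : ∀ γ ≠ 1, ∀ᶠ i in atTop, γ ∉ Λ i) (h : Γ → α) :
    ∃ H : ℕ → Γ → α, (∀ i, ∀ g ∈ Λ i, ∀ γ, H i (g⁻¹ * γ) = H i γ) ∧
      (∀ i γ, H i γ ∈ Set.range h) ∧ ∀ γ, ∀ᶠ i in atTop, H i γ = h γ := by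
  classical
  obtain ⟨e, he⟩ := exists_surjective_nat Γ
  have hcoset : ∀ i γ, ∃ n, e n * γ⁻¹ ∈ Λ i := fun i γ =>
    let ⟨n, hn⟩ := he γ; ⟨n, by simp [hn]⟩
  refine ⟨fun i γ => h (e (Nat.find (hcoset i γ))), fun i g hg γ => ?_, fun i γ => ⟨_, rfl⟩,
    fun γ => ?_⟩
  · have hiff : ∀ {n}, e n * (g⁻¹ * γ)⁻¹ ∈ Λ i ↔ e n * γ⁻¹ ∈ Λ i := by
      intro n
      rw [mul_inv_rev, inv_inv, ← mul_assoc]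
      exact (Λ i).mul_mem_cancel_right hg
    exact congrArg (h ∘ e) (Nat.find_congr' hiff)
  · have hN := Nat.find_spec (he γ)
    have hbefore : ∀ n ∈ {n | n < Nat.find (he γ)}, ∀ᶠ i in atTop, e n * γ⁻¹ ∉ Λ i :=
      fun n hn => hΛ _ (mul_inv_eq_one.not.2 (Nat.find_min (he γ) hn))
    filter_upwards [(eventually_all_finite (Set.finite_lt_nat _)).2 hbefore] with i hi
    rw [(Nat.find_eq_iff _).2 ⟨by simp [hN], hi⟩, hN]

lemma exists_tendsto_of_convT_eq_zero [Countable Γ] [DecidableEq Γ] {f : Γ →₀ ℤ}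
    {finv : Γ → ℝ} (hfinv : Summable fun γ => ‖finv γ‖)
    (h1 : convR (fun γ => (f γ : ℝ)) finv = deltaE Γ)
    (h2 : convR finv (fun γ => (f γ : ℝ)) = deltaE Γ)
    {Λ : ℕ → Subgroup Γ} (hΛ : ∀ γ ≠ 1, ∀ᶠ i in atTop, γ ∉ Λ i)
    {y : Γ → 𝕋} (hy : ∀ γ, convT y (fstar f) γ = 0) :
    ∃ z : ℕ → Γ → 𝕋, (∀ i, z i ∈ periodicPoints f (Λ i)) ∧ Tendsto z atTop (𝓝 y) := by
  set F : Γ → ℝ := fun γ => f γ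
  have hF : Summable fun γ => ‖F γ‖ := summable_of_ne_finset_zero (s := f.support)
    fun γ hγ => by simp [F, Finsupp.notMem_support_iff.1 hγ]
  set x : Γ → ℝ := fun γ => (AddCircle.equivIco 1 0 (y γ) : ℝ)
  have hxy : (fun γ => (x γ : 𝕋)) = y :=
    funext fun γ => (AddCircle.equivIco 1 0).symm_apply_apply (y γ)
  have hx_le : ∀ γ, |x γ| ≤ 1 := fun γ => by
    obtain ⟨hx_nonneg, hx_lt⟩ := (AddCircle.equivIco 1 0 (y γ)).2
    rw [abs_le]; constructor <;> linarith
  set h := rightConv F x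
  set M := ∑' α, ‖F α‖
  have hh_le : ∀ γ, |h γ| ≤ M := fun γ => (abs_rightConv_le hF hx_le γ).trans_eq (mul_one M)
  have hh_int : ∀ γ, (h γ : 𝕋) = 0 := fun γ => by
    rw [← convT_fstar_coe, hxy, hy]
  obtain ⟨H, hH_inv, hH_range, hH_lim⟩ := exists_invariant_eventually_eq hΛ h
  have hH_le : ∀ i γ, |H i γ| ≤ M := fun i γ => by
    obtain ⟨δ, hδ⟩ := hH_range i γ; rw [← hδ]; exact hh_le δ
  have hH_int : ∀ i γ, (H i γ : 𝕋) = 0 := fun i γ => by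
    obtain ⟨δ, hδ⟩ := hH_range i γ; rw [← hδ]; exact hh_int δ
  refine ⟨fun i γ => (rightConv finv (H i) γ : 𝕋), fun i => ⟨fun γ => ?_, fun g hg γ => ?_⟩, ?_⟩
  · rw [convT_fstar_coe, rightConv_rightConv hF hfinv (hH_le i), h1, rightConv_deltaE, hH_int]
  · simp only [rightConv, mul_assoc, hH_inv i g hg]
  · refine tendsto_pi_nhds.2 fun γ => ?_
    have hlim := tendsto_rightConv hfinv hH_le
      (fun δ => tendsto_const_nhds.congr' ((hH_lim δ).mono fun i hi => hi.symm)) γ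
    rw [rightConv_rightConv hfinv hF hx_le, h2, rightConv_deltaE] at hlim
    rw [← hxy]
    exact ((AddCircle.continuous_mk' 1).tendsto _).comp hlim

end Approximation

section WeakStar

lemma map_add_right_eq_of_eq_ncard_div {A : Type*} [AddGroup A] [MeasurableSpace A]
    [MeasurableAdd A] (S : AddSubgroup A) {ρ : Measure A}
    (hρ : ∀ E, MeasurableSet E → ρ E = (((S : Set A) ∩ E).ncard : ℝ≥0∞) / ((S : Set A).ncard))
    {z : A} (hz : z ∈ S) : ρ.map (· + z) = ρ := by
  ext E hE
  rw [Measure.map_apply (measurable_add_const z) hE, hρ _ (measurable_add_const z hE), hρ E hE]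
  have hpre : (S : Set A) ∩ (· + z) ⁻¹' E = (· + z) ⁻¹' ((S : Set A) ∩ E) := by
    ext x; simp [S.add_mem_cancel_right hz]
  rw [hpre, Set.ncard_preimage_of_injective_subset_range (add_left_injective z)
    (by simp [(add_right_surjective z).range_eq])]

lemma tendsto_norm_comp_addRight_sub {A : Type*} [AddMonoid A] [TopologicalSpace A]
    [ContinuousAdd A] [CompactSpace A] (c : C(A, ℝ)) :
    Tendsto (fun t => ‖c.comp (ContinuousMap.addRight t) - c‖) (𝓝 0) (𝓝 0) := by
  let Φ : C(A, C(A, ℝ)) := ContinuousMap.curry (c.comp ⟨fun p : A × A => p.2 + p.1, by fun_prop⟩)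
  have hΦ : Continuous fun t => ‖c.comp (ContinuousMap.addRight t) - c‖ :=
    (Φ.continuous.sub continuous_const).norm
  have h0 : c.comp (ContinuousMap.addRight 0) - c = 0 := by ext; simp
  simpa [h0] using hΦ.tendsto 0

lemma integral_comp_add_right_of_map_eq {A E : Type*} [AddGroup A] [MeasurableSpace A]
    [MeasurableAdd A] [NormedAddCommGroup E] [NormedSpace ℝ E] {ν : Measure A} {z : A}
    (h : ν.map (· + z) = ν) (g : A → E) : ∫ x, g (x + z) ∂ν = ∫ x, g x ∂ν :=
  MeasurePreserving.integral_comp' (f := MeasurableEquiv.addRight z) ⟨measurable_add_const z, h⟩ g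

variable {A : Type*} [AddCommGroup A] [TopologicalSpace A] [IsTopologicalAddGroup A]
  [CompactSpace A] [MeasurableSpace A] [BorelSpace A]

lemma norm_integral_sub_integral_comp_add_le (ρ : Measure A) [IsProbabilityMeasure ρ]
    (c : C(A, ℝ)) (t : A) :
    ‖∫ x, c x ∂ρ - ∫ x, c (x + t) ∂ρ‖ ≤ ‖c.comp (ContinuousMap.addRight t) - c‖ := by
  have hint : ∀ g : A → ℝ, Continuous g → Integrable g ρ :=
    fun g hg => hg.integrable_of_hasCompactSupport (.of_compactSpace g)
  rw [← integral_sub (f := fun x => c x) (g := fun x => c (x + t)) (hint _ c.continuous)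
    (hint _ (by fun_prop))]
  refine (norm_integral_le_of_norm_le_const (C := ‖c.comp (ContinuousMap.addRight t) - c‖)
    (ae_of_all _ fun x => ?_)).trans_eq (by simp)
  rw [norm_sub_rev]
  exact (c.comp (ContinuousMap.addRight t) - c).norm_coe_le_norm x

variable [SecondCountableTopology A]

lemma continuous_integral_comp_add (ρ : Measure A) [IsFiniteMeasure ρ] (c : C(A, ℝ)) :
    Continuous fun y => ∫ x, c (x + y) ∂ρ := by
  simpa using continuous_parametric_integral_of_continuous (μ := ρ)
    (f := fun y x => c (x + y)) (by fun_prop) isCompact_univ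

lemma integral_integral_sub_integral_comp_add (μ ρ : Measure A) [IsProbabilityMeasure μ]
    [IsProbabilityMeasure ρ] (hμ : ∀ᵐ p ∂ρ, μ.map (· + p) = μ) (c : C(A, ℝ)) :
    ∫ y, (∫ x, c x ∂ρ - ∫ x, c (x + y) ∂ρ) ∂μ = ∫ x, c x ∂ρ - ∫ x, c x ∂μ := by
  have hswap : ∫ y, ∫ x, c (x + y) ∂ρ ∂μ = ∫ x, ∫ y, c (x + y) ∂μ ∂ρ :=
    integral_integral_swap <|
      Continuous.integrable_of_hasCompactSupport (by fun_prop) (.of_compactSpace _)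
  have hinv : ∀ᵐ x ∂ρ, ∫ y, c (x + y) ∂μ = ∫ y, c y ∂μ := by
    filter_upwards [hμ] with x hx
    simpa only [add_comm x] using integral_comp_add_right_of_map_eq hx c
  rw [integral_sub (integrable_const _)
    ((continuous_integral_comp_add ρ c).integrable_of_hasCompactSupport (.of_compactSpace _)),
    hswap, integral_congr_ae hinv]
  simp

theorem tendsto_integral_of_map_add_eq (μ : Measure A) [IsProbabilityMeasure μ]
    (ρ : ℕ → Measure A) [∀ n, IsProbabilityMeasure (ρ n)]
    (hμ : ∀ n, ∀ᵐ p ∂ρ n, μ.map (· + p) = μ)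
    (hρ : ∀ᵐ y ∂μ, ∃ z : ℕ → A, Tendsto z atTop (𝓝 y) ∧ ∀ n, (ρ n).map (· + z n) = ρ n)
    (c : C(A, ℝ)) : Tendsto (fun n => ∫ x, c x ∂ρ n) atTop (𝓝 (∫ x, c x ∂μ)) := by
  set G : ℕ → A → ℝ := fun n y => ∫ x, c x ∂ρ n - ∫ x, c (x + y) ∂ρ n
  have hG_le : ∀ n y, ‖G n y‖ ≤ 2 * ‖c‖ := fun n y => by
    refine (norm_integral_sub_integral_comp_add_le _ c y).trans <| (norm_sub_le _ _).trans ?_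
    rw [two_mul]
    gcongr
    exact (ContinuousMap.norm_le _ (norm_nonneg c)).2 fun x => c.norm_coe_le_norm _
  have hG_lim : ∀ᵐ y ∂μ, Tendsto (G · y) atTop (𝓝 0) := by
    filter_upwards [hρ] with y ⟨z, hz, hρz⟩
    have hGz : ∀ n, G n y = ∫ x, c x ∂ρ n - ∫ x, c (x + (y - z n)) ∂ρ n := fun n => by
      rw [← integral_comp_add_right_of_map_eq (hρz n) fun x => c (x + (y - z n))]
      simp only [G, add_add_sub_cancel]
    refine squeeze_zero_norm (fun n => (hGz n).symm ▸ norm_integral_sub_integral_comp_add_le _ c _)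
      ((tendsto_norm_comp_addRight_sub c).comp ?_)
    simpa using (tendsto_const_nhds (x := y)).sub hz
  have hG := tendsto_integral_of_dominated_convergence (F := G) (fun _ => 2 * ‖c‖)
    (fun n => (continuous_const.sub (continuous_integral_comp_add _ c)).aestronglyMeasurable)
    (integrable_const _) (fun n => ae_of_all _ (hG_le n)) hG_lim
  simp only [G, integral_integral_sub_integral_comp_add μ _ (hμ _), integral_zero] at hG
  exact tendsto_sub_nhds_zero_iff.1 hG

end WeakStar

theorem stmt14_general {Γ : Type*} [Group Γ] [Countable Γ] [DecidableEq Γ]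
    (f : Γ →₀ ℤ) (finv : Γ → ℝ)
    (hfinv : Summable fun γ => ‖finv γ‖)
    (h1 : convR (fun γ => (f γ : ℝ)) finv = deltaE Γ)
    (h2 : convR finv (fun γ => (f γ : ℝ)) = deltaE Γ)
    (Γi : ℕ → Subgroup Γ)
    (hΓlim : (⋂ n, ⋃ i, ⋃ (_ : n ≤ i), ((Γi i : Set Γ))) = {1})
    (Fixn : ℕ → Set (Γ → AddCircle (1 : ℝ)))
    (hFixn : ∀ n, Fixn n = {x | (∀ γ, convT x (fstar f) γ = 0) ∧
        ∀ g ∈ Γi n, ∀ γ, x (g⁻¹ * γ) = x γ})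
    (ρ : ℕ → Measure (Γ → AddCircle (1 : ℝ))) (hρp : ∀ n, IsProbabilityMeasure (ρ n))
    (hρ : ∀ (n : ℕ) (E : Set (Γ → AddCircle (1 : ℝ))), MeasurableSet E →
      ρ n E = ((Fixn n ∩ E).ncard : ℝ≥0∞) / ((Fixn n).ncard : ℝ≥0∞))
    (μf : Measure (Γ → AddCircle (1 : ℝ))) (hμfp : IsProbabilityMeasure μf)
    (hsupp : μf {x | ∀ γ, convT x (fstar f) γ = 0} = 1)
    (hinv : ∀ z : Γ → AddCircle (1 : ℝ), (∀ γ, convT z (fstar f) γ = 0) →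
      μf.map (fun x => x + z) = μf) :
    ∀ c : C(Γ → AddCircle (1 : ℝ), ℝ),
      Tendsto (fun n => ∫ x, c x ∂(ρ n)) atTop (nhds (∫ y, c y ∂μf)) := by
  set X := {x : Γ → AddCircle (1 : ℝ) | ∀ γ, convT x (fstar f) γ = 0}
  have hX : MeasurableSet X := (isClosed_setOf_convT_eq_zero (fstar f)).measurableSet
  have hΓ : ∀ γ ≠ (1 : Γ), ∀ᶠ i in atTop, γ ∉ Γi i := fun γ hγ =>
    eventually_notMem_of_notMem_iInter_iUnion (by rwa [hΓlim])
  have hFix : ∀ n, Fixn n = periodicPoints f (Γi n) := hFixn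
  have hρX : ∀ n, ∀ᵐ p ∂ρ n, p ∈ X := fun n => by
    have hFixX : Fixn n ⊆ X := by rw [hFix n]; exact fun x hx => hx.1
    have hρXc : ρ n Xᶜ = 0 := by
      rw [hρ n _ hX.compl, (Set.disjoint_compl_right_iff_subset.2 hFixX).inter_eq]
      simp
    exact (measure_eq_zero_iff_ae_notMem.1 hρXc).mono fun p hp => by simpa using hp
  have hμX : ∀ᵐ y ∂μf, y ∈ X := (ae_mem_iff_measure_eq hX.nullMeasurableSet).2 (by simp [hsupp])
  refine tendsto_integral_of_map_add_eq μf ρ (fun n => (hρX n).mono hinv) ?_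
  filter_upwards [hμX] with y hy
  obtain ⟨z, hz, hzy⟩ := exists_tendsto_of_convT_eq_zero hfinv h1 h2 hΓ hy
  exact ⟨z, hzy, fun n => map_add_right_eq_of_eq_ncard_div _ (hFix n ▸ hρ n) (hz n)⟩

/-- Let `Γ` be a countable group, `(Γ_i)` finite-index subgroups with
`⋂_n ⋃_{i ≥ n} Γ_i = {e}`, and `f ∈ ℤΓ` invertible in `ℓ¹(Γ)`. If `ρ_n` is the
uniform probability measure on the finite set `Fix(Γ_n, X_f)` and `μ_f` is the
Haar probability measure of `X_f`, then `ρ_n → μ_f` weak*. -/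
theorem stmt14 {Γ : Type*} [Group Γ] [Countable Γ] [DecidableEq Γ]
    (f : Γ →₀ ℤ) (finv : Γ → ℝ)
    (hfinv : Summable fun γ => ‖finv γ‖)
    (h1 : convR (fun γ => (f γ : ℝ)) finv = deltaE Γ)
    (h2 : convR finv (fun γ => (f γ : ℝ)) = deltaE Γ)
    (Γi : ℕ → Subgroup Γ) (hΓfi : ∀ i, (Γi i).FiniteIndex)
    (hΓlim : (⋂ n, ⋃ i, ⋃ (_ : n ≤ i), ((Γi i : Set Γ))) = {1})
    (Fixn : ℕ → Set (Γ → AddCircle (1 : ℝ)))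
    (hFixn : ∀ n, Fixn n = {x | (∀ γ, convT x (fstar f) γ = 0) ∧
        ∀ g ∈ Γi n, ∀ γ, x (g⁻¹ * γ) = x γ})
    (ρ : ℕ → Measure (Γ → AddCircle (1 : ℝ))) (hρp : ∀ n, IsProbabilityMeasure (ρ n))
    (hρ : ∀ (n : ℕ) (E : Set (Γ → AddCircle (1 : ℝ))), MeasurableSet E →
      ρ n E = ((Fixn n ∩ E).ncard : ℝ≥0∞) / ((Fixn n).ncard : ℝ≥0∞))
    (μf : Measure (Γ → AddCircle (1 : ℝ))) (hμfp : IsProbabilityMeasure μf)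
    (hsupp : μf {x | ∀ γ, convT x (fstar f) γ = 0} = 1)
    (hinv : ∀ z : Γ → AddCircle (1 : ℝ), (∀ γ, convT z (fstar f) γ = 0) →
      μf.map (fun x => x + z) = μf) :
    ∀ c : C(Γ → AddCircle (1 : ℝ), ℝ),
      Tendsto (fun n => ∫ x, c x ∂(ρ n)) atTop (nhds (∫ y, c y ∂μf)) :=
  stmt14_general f finv hfinv h1 h2 Γi hΓlim Fixn hFixn ρ hρp hρ μf hμfp hsupp hinv
end
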